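/- If f: ℝ → ℝ is continuous with f(t)/t^{r-1} increasing on (0,∞) for some r > 2, then f(t)·t ≥ r·F(t) for all t ≥ 0, where F(t) = ∫₀ᵗ f(s) ds. -/

import Mathlib

open Real Set intervalIntegral

/-! If `f t / t ^ (r - 1)` is monotone, then on `(0, t]` the function `f` lies below
`C s ^ (r - 1)` with `C = f t / t ^ (r - 1)`; integrating gives `∫₀ᵗ f ≤ C t ^ r / r = f t * t / r`. -/

theorem le_div_rpow_mul_rpow_of_monotoneOn {f : ℝ → ℝ} {p s t : ℝ}
    (hmono : MonotoneOn (fun t : ℝ => f t / t ^ p) (Ioi 0)) (hs : 0 < s) (hst : s ≤ t) :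
    f s ≤ f t / t ^ p * s ^ p := by
  have hsp : 0 < s ^ p := rpow_pos_of_pos hs p
  calc f s = f s / s ^ p * s ^ p := by field_simp
    _ ≤ f t / t ^ p * s ^ p :=
      mul_le_mul_of_nonneg_right (hmono hs (hs.trans_le hst) hst) hsp.le

theorem integral_le_div_rpow_mul_integral_rpow {f : ℝ → ℝ} {p t : ℝ} (hp : -1 < p)
    (hf : IntervalIntegrable f MeasureTheory.volume 0 t)
    (hmono : MonotoneOn (fun t : ℝ => f t / t ^ p) (Ioi 0)) (ht : 0 ≤ t) :
    ∫ s in (0:ℝ)..t, f s ≤ ∫ s in (0:ℝ)..t, f t / t ^ p * s ^ p :=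
  integral_mono_on_of_le_Ioo ht hf ((intervalIntegrable_rpow' hp).const_mul _) fun _ hs =>
    le_div_rpow_mul_rpow_of_monotoneOn hmono hs.1 hs.2.le

theorem mul_integral_le_of_monotoneOn_div_rpow {f : ℝ → ℝ} {r t : ℝ} (hr : 0 < r)
    (hf : IntervalIntegrable f MeasureTheory.volume 0 t)
    (hmono : MonotoneOn (fun t : ℝ => f t / t ^ (r - 1)) (Ioi 0)) (ht : 0 ≤ t) :
    r * ∫ s in (0:ℝ)..t, f s ≤ f t * t := by
  rcases ht.eq_or_lt with rfl | htpos
  · simp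
  have hbound := integral_le_div_rpow_mul_integral_rpow (by linarith) hf hmono ht
  have htr : t ^ r = t ^ (r - 1) * t := by
    rw [← rpow_add_one htpos.ne']
    ring_nf
  have hpow : 0 < t ^ (r - 1) := rpow_pos_of_pos htpos _
  rw [integral_const_mul, integral_rpow (Or.inl (by linarith)), sub_add_cancel,
    zero_rpow hr.ne', htr] at hbound
  calc r * ∫ s in (0:ℝ)..t, f s
      ≤ r * (f t / t ^ (r - 1) * ((t ^ (r - 1) * t - 0) / r)) := by gcongr
    _ = f t * t := by field_simp; ring

/-- If `f` is continuous and `t ↦ f t / t^(r-1)` is increasing on `(0,∞)`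
with `r > 2`, then `f(t)·t ≥ r·F(t)` for all `t ≥ 0`, where `F t = ∫₀ᵗ f`. -/
theorem ambrosetti_rabinowitz_type (f : ℝ → ℝ) (r : ℝ)
    (hf_cont : Continuous f) (hr : 2 < r)
    (hmono : MonotoneOn (fun t : ℝ => f t / t ^ (r - 1)) (Ioi (0:ℝ))) :
    ∀ t : ℝ, 0 ≤ t → f t * t ≥ r * ∫ s in (0:ℝ)..t, f s := fun t ht =>
  mul_integral_le_of_monotoneOn_div_rpow (by linarith) (hf_cont.intervalIntegrable 0 t) hmono ht
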